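/- Fix d ≥ 1 and ψ_S ∈ ℂ^d of Euclidean norm 1. Let (M_j)_{j≥1} be a sequence in M_d(ℂ) with M_j ψ_S = ψ_S for all j, and for each j let ψ_j ∈ ℂ^d satisfy M_j^* ψ_j = ψ_j and ⟨ψ_j, ψ_S⟩ = 1. Set P_j := |ψ_S⟩⟨ψ_j|, Q_j := I − P_j, M_{Q_j} := Q_j M_j Q_j, Ψ_n := M_1 M_2 ⋯ M_n. Then for every n ≥ 1: Ψ_n = |ψ_S⟩⟨θ_n| + M_{Q_1} M_{Q_2} ⋯ M_{Q_n}, where θ_n = ψ_n + M_{Q_n}^* ψ_{n−1} + M_{Q_n}^* M_{Q_{n−1}}^* ψ_{n−2} + ⋯ + M_{Q_n}^* ⋯ M_{Q_2}^* ψ_1, and moreover θ_n = M_n^* ⋯ M_2^* ψ_1 and ⟨θ_n, ψ_S⟩ = 1. -/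

import Mathlib

open scoped BigOperators
open MeasureTheory Filter ContinuousLinearMap

noncomputable section

abbrev Evec (d : ℕ) := EuclideanSpace ℂ (Fin d)
abbrev Op (d : ℕ) := Evec d →L[ℂ] Evec d

/-- `ketBra u v = |u⟩⟨v|`, the rank-one operator `x ↦ ⟪v, x⟫ • u`. -/
def ketBra {d : ℕ} (u v : Evec d) : Op d := (innerSL ℂ v).smulRight u

/-!
Write `P_j = |ψ_S⟩⟨ψ_j|`. Since `M_j ψ_S = ψ_S`, `M_j^* ψ_j = ψ_j` and `⟨ψ_j, ψ_S⟩ = 1`, the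
operator `P_j` is an idempotent with `P_j M_j = M_j P_j = P_j`, so `M_{Q_j} = M_j - P_j` and
`M_j = |ψ_S⟩⟨ψ_j| + M_{Q_j}` with `M_{Q_j} ψ_S = 0`. Multiplying these decompositions out, every
cross term `M_{Q_1} ⋯ M_{Q_k} |ψ_S⟩⟨ψ_{k+1}|` vanishes, and the rank-one terms collect into
`|ψ_S⟩⟨M_n^* ⋯ M_2^* ψ_1|`. Finally `θ_n = M_n^* θ_{n-1} = ψ_n + M_{Q_n}^* θ_{n-1}` because
`⟨θ_{n-1}, ψ_S⟩ = 1`, a linear recursion whose solution is the stated sum.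
-/

theorem List.prod_ofFn_succ_sub {R : Type*} [Monoid R] (f : ℕ → R) (n k : ℕ) :
    (List.ofFn fun i : Fin (k + 1) => f (n + 1 - i)).prod =
      f (n + 1) * (List.ofFn fun i : Fin k => f (n - i)).prod := by
  simp [List.ofFn_succ]

theorem ContinuousLinearMap.prod_ofFn_succ_apply_eq_zero {R E : Type*} [Semiring R]
    [TopologicalSpace E] [AddCommMonoid E] [Module R E] {N : ℕ → E →L[R] E} {u : E}
    (hN : ∀ j, N j u = 0) (n : ℕ) : (List.ofFn fun i : Fin (n + 1) => N i).prod u = 0 := by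
  rw [List.ofFn_succ', List.prod_concat, mul_apply_eq_comp, hN, map_zero]

theorem ContinuousLinearMap.inner_list_prod_apply_of_adjoint_apply_eq {𝕜 E : Type*} [RCLike 𝕜]
    [NormedAddCommGroup E] [InnerProductSpace 𝕜 E] [CompleteSpace E] {u : E}
    (L : List (E →L[𝕜] E)) (hL : ∀ A ∈ L, adjoint A u = u) (v : E) :
    inner 𝕜 (L.prod v) u = inner 𝕜 v u := by
  induction L with
  | nil => simp
  | cons A L ih =>
    rw [List.prod_cons, mul_apply_eq_comp, ← adjoint_inner_right, hL A List.mem_cons_self,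
      ih fun B hB => hL B (List.mem_cons_of_mem A hB)]

section KetBra

variable {d : ℕ}

@[simp]
theorem ketBra_apply (u v x : Evec d) : ketBra u v x = inner ℂ v x • u := rfl

theorem mul_ketBra (A : Op d) (u v : Evec d) : A * ketBra u v = ketBra (A u) v := by
  ext x
  simp

theorem ketBra_mul (A : Op d) (u v : Evec d) : ketBra u v * A = ketBra u (adjoint A v) := by
  ext x
  simp [adjoint_inner_left]

theorem adjoint_ketBra (u v : Evec d) : adjoint (ketBra u v) = ketBra v u := by
  symm
  rw [eq_adjoint_iff]
  intro x y
  simp only [ketBra_apply, inner_smul_left, inner_smul_right, inner_conj_symm]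
  ring

theorem compression_eq_sub_ketBra {M : Op d} {u v : Evec d} (hMu : M u = u)
    (hMv : adjoint M v = v) (huv : inner ℂ v u = 1) :
    (1 - ketBra u v) * M * (1 - ketBra u v) = M - ketBra u v := by
  have hPM : ketBra u v * M = ketBra u v := by rw [ketBra_mul, hMv]
  have hMP : M * ketBra u v = ketBra u v := by rw [mul_ketBra, hMu]
  have hPP : ketBra u v * ketBra u v = ketBra u v := by rw [mul_ketBra, ketBra_apply, huv, one_smul]
  simp only [sub_mul, mul_sub, one_mul, mul_one, hPM, hMP, hPP]
  abel

end KetBra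

section Products

variable {d : ℕ} {u : Evec d}

theorem prod_ofFn_eq_ketBra_add {M N : ℕ → Op d} {ψ : ℕ → Evec d}
    (hM : ∀ j, M j = ketBra u (ψ j) + N j) (hN : ∀ j, N j u = 0) (n : ℕ) :
    (List.ofFn fun i : Fin (n + 1) => M i).prod =
      ketBra u ((List.ofFn fun i : Fin n => adjoint (M (n - i))).prod (ψ 0)) +
        (List.ofFn fun i : Fin (n + 1) => N i).prod := by
  induction n with
  | zero => simp [hM]
  | succ n ih =>
    have hθ : adjoint (M (n + 1)) ((List.ofFn fun i : Fin n => adjoint (M (n - i))).prod (ψ 0)) =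
        (List.ofFn fun i : Fin (n + 1) => adjoint (M (n + 1 - i))).prod (ψ 0) := by
      rw [List.prod_ofFn_succ_sub fun j => adjoint (M j)]
      rfl
    have hcross : (List.ofFn fun i : Fin (n + 1) => N i).prod * ketBra u (ψ (n + 1)) = 0 := by
      rw [mul_ketBra, prod_ofFn_succ_apply_eq_zero hN]
      ext
      simp
    rw [List.ofFn_succ', List.prod_concat, List.ofFn_succ' (n := n + 1), List.prod_concat]
    simp only [Fin.val_castSucc, Fin.val_last]
    rw [ih, add_mul, ketBra_mul, hθ, hM (n + 1), mul_add, hcross, zero_add]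

theorem adjoint_apply_eq_add_of_inner_eq_one {A N : Op d} {v w : Evec d}
    (hA : A = ketBra u v + N) (hw : inner ℂ w u = 1) : adjoint A w = v + adjoint N w := by
  rw [hA, map_add, add_apply, adjoint_ketBra, ketBra_apply, ← inner_conj_symm, hw, map_one,
    one_smul]

theorem eq_sum_of_eq_add_adjoint_apply {N : ℕ → Op d} {ψ θ : ℕ → Evec d} (h0 : θ 0 = ψ 0)
    (hsucc : ∀ n, θ (n + 1) = ψ (n + 1) + adjoint (N (n + 1)) (θ n)) (n : ℕ) :
    θ n = ∑ k : Fin (n + 1),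
      (List.ofFn fun i : Fin k => adjoint (N (n - i))).prod (ψ (n - k)) := by
  induction n with
  | zero => simp [h0]
  | succ n ih =>
    rw [hsucc, ih, map_sum, Fin.sum_univ_succ (n := n + 1)]
    congr 1
    refine Finset.sum_congr rfl fun k _ => ?_
    rw [Fin.val_succ, List.prod_ofFn_succ_sub fun j => adjoint (N j)]
    simp

end Products

/-- The paper's sequence `(M_j)_{j ≥ 1}` is indexed from `0` here: `M 0, M 1, …` stand for
`M_1, M_2, …`, and likewise for `ψ`, `P`, `Q`, `MQ`. -/
theorem stmt3_general {d : ℕ} (ψS : Evec d)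
    (M : ℕ → Op d) (hfix : ∀ j, M j ψS = ψS)
    (ψ : ℕ → Evec d)
    (hψfix : ∀ j, adjoint (M j) (ψ j) = ψ j)
    (hψnorm : ∀ j, (inner ℂ (ψ j) ψS : ℂ) = 1)
    (P Q MQ : ℕ → Op d)
    (hP : ∀ j, P j = ketBra ψS (ψ j))
    (hQ : ∀ j, Q j = 1 - P j)
    (hMQ : ∀ j, MQ j = Q j * M j * Q j)
    (Ψ : ℕ → Op d)
    (hΨ : ∀ n, Ψ n = (List.ofFn fun i : Fin n => M i).prod)
    (θ : ℕ → Evec d)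
    (hθ : ∀ n, θ n = ((List.ofFn fun i : Fin (n - 1) => adjoint (M (n - 1 - i))).prod) (ψ 0)) :
    ∀ n : ℕ, 1 ≤ n →
      Ψ n = ketBra ψS (θ n) + (List.ofFn fun i : Fin n => MQ i).prod ∧
      θ n = ∑ k : Fin n,
        ((List.ofFn fun i : Fin k => adjoint (MQ (n - 1 - i))).prod) (ψ (n - 1 - k)) ∧
      (inner ℂ (θ n) ψS : ℂ) = 1 := by
  have hMQ_eq : ∀ j, MQ j = M j - ketBra ψS (ψ j) := fun j => by
    rw [hMQ, hQ, hP]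
    exact compression_eq_sub_ketBra (hfix j) (hψfix j) (hψnorm j)
  have hM : ∀ j, M j = ketBra ψS (ψ j) + MQ j := fun j => by rw [hMQ_eq]; abel
  have hMQ_ψS : ∀ j, MQ j ψS = 0 := fun j => by simp [hMQ_eq, hfix, hψnorm]
  have hθ_succ : ∀ m, θ (m + 1) = (List.ofFn fun i : Fin m => adjoint (M (m - i))).prod (ψ 0) :=
    fun m => by simp [hθ]
  have hθ_inner : ∀ m, inner ℂ (θ (m + 1)) ψS = 1 := fun m => by
    rw [hθ_succ, inner_list_prod_apply_of_adjoint_apply_eq _ (by simp [hfix]), hψnorm]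
  intro n hn
  obtain ⟨n, rfl⟩ := Nat.exists_eq_add_of_le' hn
  refine ⟨?_, ?_, hθ_inner n⟩
  · rw [hΨ, hθ_succ, prod_ofFn_eq_ketBra_add hM hMQ_ψS]
  · simp only [Nat.add_sub_cancel]
    refine eq_sum_of_eq_add_adjoint_apply (θ := fun m => θ (m + 1)) (by simp [hθ]) (fun m => ?_) n
    rw [← adjoint_apply_eq_add_of_inner_eq_one (hM (m + 1)) (hθ_inner m), hθ_succ, hθ_succ,
      List.prod_ofFn_succ_sub fun j => adjoint (M j)]
    rfl

/-- decomposition `Ψ_n = |ψ_S⟩⟨θ_n| + M_{Q_1} ⋯ M_{Q_n}` with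
`θ_n = M_n^* ⋯ M_2^* ψ_1 = Σ_{k=0}^{n-1} M_{Q_n}^* ⋯ M_{Q_{n-k+1}}^* ψ_{n-k}` and
`⟨θ_n, ψ_S⟩ = 1`.  The sequence `(M_j)_{j≥1}` of the paper is indexed here by `j : ℕ`
(so `M 0, M 1, …` stand for `M_1, M_2, …`). -/
theorem stmt3 {d : ℕ} (hd : 1 ≤ d) (ψS : Evec d) (hψS : ‖ψS‖ = 1)
    (M : ℕ → Op d) (hfix : ∀ j, M j ψS = ψS)
    (ψ : ℕ → Evec d)
    (hψfix : ∀ j, adjoint (M j) (ψ j) = ψ j)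
    (hψnorm : ∀ j, (inner ℂ (ψ j) ψS : ℂ) = 1)
    (P Q MQ : ℕ → Op d)
    (hP : ∀ j, P j = ketBra ψS (ψ j))
    (hQ : ∀ j, Q j = 1 - P j)
    (hMQ : ∀ j, MQ j = Q j * M j * Q j)
    (Ψ : ℕ → Op d)
    (hΨ : ∀ n, Ψ n = (List.ofFn fun i : Fin n => M i).prod)
    (θ : ℕ → Evec d)
    (hθ : ∀ n, θ n = ((List.ofFn fun i : Fin (n - 1) => adjoint (M (n - 1 - i))).prod) (ψ 0)) :
    ∀ n : ℕ, 1 ≤ n →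
      Ψ n = ketBra ψS (θ n) + (List.ofFn fun i : Fin n => MQ i).prod ∧
      θ n = ∑ k : Fin n,
        ((List.ofFn fun i : Fin k => adjoint (MQ (n - 1 - i))).prod) (ψ (n - 1 - k)) ∧
      (inner ℂ (θ n) ψS : ℂ) = 1 :=
  stmt3_general ψS M hfix ψ hψfix hψnorm P Q MQ hP hQ hMQ Ψ hΨ θ hθ
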